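/- In type A_n with x = Σ a_β·α_β written in the simple-root basis, condition (2) [a_β > (c_{α,β}/c_{α,α})·a_α for all α ≠ β, plus positivity] is equivalent to condition (3) [the same inequalities only for adjacent pairs |α−β| = 1, plus positivity], where c = (C^T)^{-1} for the A_n Cartan matrix C. -/

import Mathlib

/-- The inverse of the `A_n` Cartan matrix (symmetric for `A_n`):
`c_{ij} = min(i,j)·(n+1-max(i,j))/(n+1)` in 1-indexed form. -/
def invCartanA (n : ℕ) : Matrix (Fin n) (Fin n) ℚ := fun i j =>
  ((min i.val j.val : ℚ) + 1) * ((n : ℚ) - (max i.val j.val : ℚ)) / ((n : ℚ) + 1)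

/-- Condition (2): `a_i > 0` for all `i`, and `a_j > (c_{i,j}/c_{i,i})·a_i` for all `i ≠ j`. -/
def P2 (n : ℕ) (a : Fin n → ℚ) : Prop :=
  (∀ i, 0 < a i) ∧
  ∀ i j : Fin n, i ≠ j → invCartanA n i j / invCartanA n i i * a i < a j

/-- Condition (3): `a_i > 0` for all `i`, and `a_j > (c_{i,j}/c_{i,i})·a_i` for
adjacent pairs `|i - j| = 1` only. -/
def P3 (n : ℕ) (a : Fin n → ℚ) : Prop :=
  (∀ i, 0 < a i) ∧
  ∀ i j : Fin n, (i.val + 1 = j.val ∨ j.val + 1 = i.val) →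
    invCartanA n i j / invCartanA n i i * a i < a j

/-!
Row `i` of the inverse Cartan matrix of `A_n`, divided by its diagonal entry, is `w_j / w_i`
with `w_k = n - k` to the right of the diagonal and `w_k = k + 1` to the left (0-indexed).
Hence `c_{ij}/c_{ii} · a_i < a_j` says exactly that `a_i / w_i < a_j / w_j`: for `i < j` that
`a_k / (n - k)` increases from `i` to `j`, and for `j < i` that `a_k / (k + 1)` decreases from
`j` to `i`. Monotonicity along adjacent indices propagates to all pairs.
-/

theorem Fin.strictMono_of_lt_of_val_add_one_eq {α : Type*} [Preorder α] {n : ℕ}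
    {f : Fin n → α} (hf : ∀ i j : Fin n, i.val + 1 = j.val → f i < f j) : StrictMono f := by
  cases n with
  | zero => exact fun i => i.elim0
  | succ n => exact Fin.strictMono_iff_lt_succ.2 fun i => hf _ _ rfl

theorem div_mul_lt_iff_div_lt_div {K : Type*} [Field K] [LinearOrder K] [IsStrictOrderedRing K]
    {u v x y : K} (hu : 0 < u) (hv : 0 < v) : v / u * x < y ↔ x / u < y / v := by
  rw [div_lt_div_iff₀ hu hv, div_mul_eq_mul_div, div_lt_iff₀ hu, mul_comm v x]

namespace invCartanA

variable {n : ℕ} {i j : Fin n}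

theorem div_diag_of_le (h : i ≤ j) :
    invCartanA n i j / invCartanA n i i = ((n : ℚ) - j) / ((n : ℚ) - i) := by
  have hi : (i : ℚ) < n := by exact_mod_cast i.isLt
  have hij : (i : ℚ) ≤ j := by exact_mod_cast h
  simp only [invCartanA, min_eq_left hij, max_eq_right hij, min_self, max_self]
  field_simp [sub_ne_zero.2 hi.ne']

theorem div_diag_of_ge (h : j ≤ i) :
    invCartanA n i j / invCartanA n i i = ((j : ℚ) + 1) / ((i : ℚ) + 1) := by
  have hi : (i : ℚ) < n := by exact_mod_cast i.isLt
  have hji : (j : ℚ) ≤ i := by exact_mod_cast h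
  simp only [invCartanA, min_eq_right hji, max_eq_left hji, min_self, max_self]
  field_simp [sub_ne_zero.2 hi.ne']

theorem div_diag_mul_lt_iff_of_le (h : i ≤ j) {x y : ℚ} :
    invCartanA n i j / invCartanA n i i * x < y ↔ x / ((n : ℚ) - i) < y / ((n : ℚ) - j) := by
  have hi : (i : ℚ) < n := by exact_mod_cast i.isLt
  have hj : (j : ℚ) < n := by exact_mod_cast j.isLt
  rw [div_diag_of_le h, div_mul_lt_iff_div_lt_div (sub_pos.2 hi) (sub_pos.2 hj)]

theorem div_diag_mul_lt_iff_of_ge (h : j ≤ i) {x y : ℚ} :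
    invCartanA n i j / invCartanA n i i * x < y ↔ x / ((i : ℚ) + 1) < y / ((j : ℚ) + 1) := by
  rw [div_diag_of_ge h, div_mul_lt_iff_div_lt_div (by positivity) (by positivity)]

end invCartanA

/-- For type `A_n`, the cone condition over all pairs is equivalent to the
cone condition over adjacent pairs only. -/
theorem stmt10 (n : ℕ) (a : Fin n → ℚ) : P2 n a ↔ P3 n a := by
  constructor
  · rintro ⟨hpos, h⟩
    exact ⟨hpos, fun i j hij => h i j fun hij' => by subst hij'; omega⟩
  · rintro ⟨hpos, h⟩
    have hup : StrictMono fun k : Fin n => a k / ((n : ℚ) - k) :=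
      Fin.strictMono_of_lt_of_val_add_one_eq fun i j hij =>
        (invCartanA.div_diag_mul_lt_iff_of_le (by omega)).1 (h i j (.inl hij))
    have hdown : StrictAnti fun k : Fin n => a k / ((k : ℚ) + 1) :=
      Fin.strictMono_of_lt_of_val_add_one_eq (α := ℚᵒᵈ) fun i j hij =>
        (invCartanA.div_diag_mul_lt_iff_of_ge (by omega)).1 (h j i (.inr hij))
    refine ⟨hpos, fun i j hij => ?_⟩
    rcases hij.lt_or_gt with hlt | hgt
    · exact (invCartanA.div_diag_mul_lt_iff_of_le hlt.le).2 (hup hlt)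
    · exact (invCartanA.div_diag_mul_lt_iff_of_ge hgt.le).2 (hdown hgt)
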